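/- arXiv:1306.4770 — 2 statements merged into one kernel-verified Lean document; each statement's English description precedes it below -/
import Mathlib

section
/- Let Q : [0,∞) → Mat(2n,ℂ) be measurable with ‖Q(x)‖ ≤ C e^{-εx} for constants C, ε > 0, let σ be an invertible real diagonal 2n×2n matrix, and let λ ∈ ℝ. Then for any vector c ∈ ℂ^{2n}, the Volterra-type integral equation y(x) = e^{iλσx} c + i ∫ₓ^∞ e^{iλσ(x-s)} Q(s) y(s) ds has a unique bounded continuous solution y : [0,∞) → ℂ^{2n}. -/
open MeasureTheory Set

attribute [local instance] Matrix.linftyOpNormedAddCommGroup Matrix.linftyOpNormedRing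

/-- `e^{iλσx}` for the diagonal matrix `σ = diagonal ξ`. -/
noncomputable def expDiag (n : ℕ) (ξ : Fin (2*n) → ℝ) (lam x : ℝ) :
    Matrix (Fin (2*n)) (Fin (2*n)) ℂ :=
  Matrix.diagonal fun k => Complex.exp (Complex.I * lam * ξ k * x)

namespace VolterraAux

lemma integral_exp_neg_mul_Ioi {b : ℝ} (hb : 0 < b) (a : ℝ) :
    ∫ s in Ioi a, Real.exp (-b * s) = Real.exp (-b * a) / b := by
  have hderiv : ∀ x ∈ Ici a, HasDerivAt (fun s => -(Real.exp (-b * s) / b))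
      (Real.exp (-b * x)) x := by
    intro x _
    have h1 : HasDerivAt (fun s : ℝ => -b * s) (-b) x := by
      simpa using (hasDerivAt_id x).const_mul (-b)
    have h3 := (h1.exp.div_const b).neg
    refine (h3 : HasDerivAt (fun s => -(Real.exp (-b * s) / b)) _ x).congr_deriv ?_
    rw [mul_neg, neg_div, neg_neg, mul_div_assoc, div_self hb.ne', mul_one]
  have hint : IntegrableOn (fun s => Real.exp (-b * s)) (Ioi a) := exp_neg_integrableOn_Ioi a hb
  have htend : Filter.Tendsto (fun s => -(Real.exp (-b * s) / b)) Filter.atTop (nhds 0) := by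
    have h0 : Filter.Tendsto (fun s : ℝ => -b * s) Filter.atTop Filter.atBot := by
      simpa using (Filter.tendsto_id (α := ℝ)).const_mul_atTop_of_neg (neg_neg_iff_pos.mpr hb)
    have := (Real.tendsto_exp_atBot.comp h0).div_const b
    simpa using this.neg
  have := integral_Ioi_of_hasDerivAt_of_tendsto
    ((hderiv a (le_refl a)).continuousAt.continuousWithinAt)
    (fun x hx => hderiv x (mem_Ici.2 (le_of_lt hx))) hint htend
  rw [this]; ring

lemma expDiag_norm_le (n : ℕ) (ξ : Fin (2*n) → ℝ) (lam x : ℝ) :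
    ‖expDiag n ξ lam x‖ ≤ 1 := by
  rw [expDiag, Matrix.linfty_opNorm_diagonal]
  apply pi_norm_le_iff_of_nonneg zero_le_one |>.2
  intro k
  rw [Complex.norm_exp]
  have : (Complex.I * lam * ξ k * x).re = 0 := by simp
  rw [this, Real.exp_zero]

lemma expDiag_mul (n : ℕ) (ξ : Fin (2*n) → ℝ) (lam a b : ℝ) :
    expDiag n ξ lam a * expDiag n ξ lam b = expDiag n ξ lam (a + b) := by
  rw [expDiag, expDiag, expDiag, Matrix.diagonal_mul_diagonal]
  apply congrArg Matrix.diagonal; funext k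
  rw [← Complex.exp_add]
  congr 1
  push_cast
  ring

lemma expDiag_continuous (n : ℕ) (ξ : Fin (2*n) → ℝ) (lam : ℝ) :
    Continuous fun x => expDiag n ξ lam x := by
  apply continuous_pi; intro i; apply continuous_pi; intro j
  simp only [expDiag, Matrix.diagonal, Matrix.of_apply]
  by_cases h : i = j
  · simp only [if_pos h]
    exact Complex.continuous_exp.comp <| by continuity
  · simp only [if_neg h]
    exact continuous_const

variable {E : Type*} [NormedAddCommGroup E] [NormedSpace ℝ E]

lemma Ioi_integral_split {f : ℝ → E} (hf : Integrable f) (a b : ℝ) :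
    (∫ s in Ioi a, f s) = (∫ t in a..b, f t) + ∫ s in Ioi b, f s := by
  rcases le_total a b with h | h
  · rw [intervalIntegral.integral_of_le h, ← setIntegral_union (Ioc_disjoint_Ioi le_rfl)
      measurableSet_Ioi hf.integrableOn hf.integrableOn, Ioc_union_Ioi_eq_Ioi h]
  · have h2 : (∫ s in Ioi b, f s) = (∫ s in Ioc b a, f s) + ∫ s in Ioi a, f s := by
      rw [← setIntegral_union (Ioc_disjoint_Ioi le_rfl) measurableSet_Ioi hf.integrableOn
        hf.integrableOn, Ioc_union_Ioi_eq_Ioi h]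
    rw [intervalIntegral.integral_symm, intervalIntegral.integral_of_le h, h2]
    abel

lemma key_bound {b B : ℝ} (hb : 0 < b) (hB : 0 ≤ B) (x : ℝ) (f : ℝ → E)
    (hf : ∀ s ∈ Ioi x, ‖f s‖ ≤ indicator (Ici 0) (fun s => B * Real.exp (-b * s)) s) :
    ‖∫ s in Ioi x, f s‖ ≤ B * Real.exp (-b * max x 0) / b := by
  have hbase : IntegrableOn (fun s => B * Real.exp (-b * s)) (Ici 0) := by
    rw [integrableOn_Ici_iff_integrableOn_Ioi]
    exact (exp_neg_integrableOn_Ioi 0 hb).const_mul B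
  have hind : Integrable (indicator (Ici 0) (fun s => B * Real.exp (-b * s))) := by
    rw [integrable_indicator_iff measurableSet_Ici]; exact hbase
  have h1 : ‖∫ s in Ioi x, f s‖ ≤
      ∫ s in Ioi x, indicator (Ici 0) (fun s => B * Real.exp (-b * s)) s :=
    norm_integral_le_of_norm_le hind.restrict
      (ae_restrict_of_forall_mem measurableSet_Ioi hf)
  refine h1.trans ?_
  rw [setIntegral_indicator measurableSet_Ici]
  have hsets : (Ioi x ∩ Ici 0 : Set ℝ) =ᵐ[volume] Ioi (max x 0) := by
    rcases lt_or_ge x 0 with h | h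
    · have e1 : (Ioi x ∩ Ici 0 : Set ℝ) = Ici 0 :=
        inter_eq_right.2 (fun s hs => lt_of_lt_of_le h hs)
      rw [e1, max_eq_right (le_of_lt h)]
      exact Ioi_ae_eq_Ici.symm
    · have e1 : (Ioi x ∩ Ici 0 : Set ℝ) = Ioi x :=
        inter_eq_left.2 (fun s hs => le_trans h (le_of_lt hs))
      rw [e1, max_eq_left h]
      exact Filter.EventuallyEq.rfl
  rw [setIntegral_congr_set hsets, integral_const_mul, integral_exp_neg_mul_Ioi hb,
    mul_div_assoc]

variable {n : ℕ} {ξ : Fin (2*n) → ℝ} {lam : ℝ}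

lemma norm_expDiag_mul_mulVec_le (n : ℕ) (ξ : Fin (2*n) → ℝ) (lam t : ℝ)
    (A : Matrix (Fin (2*n)) (Fin (2*n)) ℂ) (v : Fin (2*n) → ℂ) :
    ‖(expDiag n ξ lam t * A).mulVec v‖ ≤ ‖A‖ * ‖v‖ := by
  calc ‖(expDiag n ξ lam t * A).mulVec v‖ ≤ ‖expDiag n ξ lam t * A‖ * ‖v‖ :=
        Matrix.linfty_opNorm_mulVec _ _
    _ ≤ (‖expDiag n ξ lam t‖ * ‖A‖) * ‖v‖ := by
        apply mul_le_mul_of_nonneg_right (Matrix.linfty_opNorm_mul _ _) (norm_nonneg _)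
    _ ≤ ‖A‖ * ‖v‖ := by
        apply mul_le_mul_of_nonneg_right _ (norm_nonneg _)
        exact mul_le_of_le_one_left (norm_nonneg _) (expDiag_norm_le n ξ lam t)

lemma meas_integrand (x : ℝ)
    (A : ℝ → Matrix (Fin (2*n)) (Fin (2*n)) ℂ)
    (hA : ∀ i j, Measurable (fun s => A s i j))
    (w : ℝ → Fin (2*n) → ℂ) (hw : Measurable w) :
    Measurable (fun s => (expDiag n ξ lam (x - s) * A s).mulVec (w s)) := by
  apply measurable_pi_lambda
  intro i
  simp only [Matrix.mulVec, Matrix.mul_apply, dotProduct]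
  apply Finset.measurable_sum; intro j _
  apply Measurable.mul _ ((measurable_pi_apply j).comp hw)
  apply Finset.measurable_sum; intro k _
  apply Measurable.mul _ (hA k j)
  have hc : Continuous fun s : ℝ => expDiag n ξ lam (x - s) i k :=
    ((continuous_apply k).comp ((continuous_apply i).comp
      (expDiag_continuous n ξ lam))).comp (continuous_const.sub continuous_id)
  exact hc.measurable

lemma aesm_integrand (μ : Measure ℝ) (x : ℝ)
    (A : ℝ → Matrix (Fin (2*n)) (Fin (2*n)) ℂ)
    (hA : ∀ i j, Measurable (fun s => A s i j))
    (w : ℝ → Fin (2*n) → ℂ) (hw : ∀ j, AEMeasurable (fun s => w s j) μ) :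
    AEStronglyMeasurable (fun s => (expDiag n ξ lam (x - s) * A s).mulVec (w s)) μ := by
  set W : ℝ → Fin (2*n) → ℂ := fun s j => (hw j).mk _ s with hWdef
  have hWm : Measurable W := measurable_pi_lambda _ (fun j => (hw j).measurable_mk)
  have heq : ∀ᵐ s ∂μ, w s = W s := by
    have h1 : ∀ᵐ s ∂μ, ∀ j, w s j = W s j := ae_all_iff.2 fun j => (hw j).ae_eq_mk
    exact h1.mono fun s h => funext h
  refine ((meas_integrand (ξ := ξ) (lam := lam) x A hA W hWm).aestronglyMeasurable).congr
    (heq.mono fun s h => ?_)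
  simp only [h]

lemma integrable_integrand {C ε : ℝ} (hε : 0 < ε) (x W : ℝ)
    (A : ℝ → Matrix (Fin (2*n)) (Fin (2*n)) ℂ)
    (hA : ∀ i j, Measurable (fun s => A s i j))
    (hAb : ∀ s ∈ Ioi x, ‖A s‖ ≤ C * Real.exp (-ε * s))
    (w : ℝ → Fin (2*n) → ℂ)
    (hw : ∀ j, AEMeasurable (fun s => w s j) (volume.restrict (Ioi x)))
    (hwb : ∀ s ∈ Ioi x, ‖w s‖ ≤ W) :
    Integrable (fun s => (expDiag n ξ lam (x - s) * A s).mulVec (w s))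
      (volume.restrict (Ioi x)) := by
  apply Integrable.mono' (g := fun s => (C * max W 0) * Real.exp (-ε * s))
  · exact (((exp_neg_integrableOn_Ioi x hε).const_mul (C * max W 0)))
  · exact aesm_integrand _ x A hA w hw
  · refine (ae_restrict_iff' measurableSet_Ioi).2 (Filter.Eventually.of_forall ?_)
    intro s hs
    calc ‖(expDiag n ξ lam (x - s) * A s).mulVec (w s)‖ ≤ ‖A s‖ * ‖w s‖ :=
          norm_expDiag_mul_mulVec_le n ξ lam _ _ _
      _ ≤ (C * Real.exp (-ε * s)) * max W 0 := by
          apply mul_le_mul (hAb s hs) ((hwb s hs).trans (le_max_left _ _)) (norm_nonneg _)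
          exact le_trans (norm_nonneg _) (hAb s hs)
      _ = (C * max W 0) * Real.exp (-ε * s) := by ring

lemma cont_mulVec {A : ℝ → Matrix (Fin (2*n)) (Fin (2*n)) ℂ} (hA : Continuous A)
    {v : ℝ → Fin (2*n) → ℂ} (hv : Continuous v) :
    Continuous fun x => (A x).mulVec (v x) := by
  apply continuous_pi; intro i
  simp only [Matrix.mulVec, dotProduct]
  apply continuous_finset_sum; intro j _
  exact ((continuous_apply j).comp ((continuous_apply i).comp hA)).mul
    ((continuous_apply j).comp hv)

end VolterraAux
open VolterraAux BoundedContinuousFunction in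
set_option maxHeartbeats 1600000 in
theorem volterra_equation_unique_bounded_solution
    (n : ℕ) (C ε : ℝ) (hC : 0 < C) (hε : 0 < ε)
    (ξ : Fin (2*n) → ℝ) (hξ : ∀ k, ξ k ≠ 0)
    (Q : ℝ → Matrix (Fin (2*n)) (Fin (2*n)) ℂ)
    (hQm : ∀ i j, Measurable fun x => Q x i j)
    (hQ : ∀ x ≥ (0 : ℝ), ‖Q x‖ ≤ C * Real.exp (-ε * x))
    (lam : ℝ) (c : Fin (2*n) → ℂ) :
    ∃ y : ℝ → (Fin (2*n) → ℂ),
      (ContinuousOn y (Ici 0) ∧ (∃ M : ℝ, ∀ x ≥ (0 : ℝ), ‖y x‖ ≤ M) ∧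
        (∀ x ≥ (0 : ℝ), y x = (expDiag n ξ lam x).mulVec c +
          Complex.I • ∫ s in Ioi x, (expDiag n ξ lam (x - s) * Q s).mulVec (y s))) ∧
      (∀ z : ℝ → (Fin (2*n) → ℂ),
        ContinuousOn z (Ici 0) → (∃ M : ℝ, ∀ x ≥ (0 : ℝ), ‖z x‖ ≤ M) →
        (∀ x ≥ (0 : ℝ), z x = (expDiag n ξ lam x).mulVec c +
          Complex.I • ∫ s in Ioi x, (expDiag n ξ lam (x - s) * Q s).mulVec (z s)) →
        ∀ x ≥ (0 : ℝ), z x = y x) := by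
  classical
  -- extend Q by zero to the left of 0
  set Q' : ℝ → Matrix (Fin (2*n)) (Fin (2*n)) ℂ := fun s => if 0 ≤ s then Q s else 0
    with hQ'def
  have hQ'm : ∀ i j, Measurable fun s => Q' s i j := by
    intro i j
    have : (fun s => Q' s i j) = fun s => if 0 ≤ s then Q s i j else 0 := by
      funext s; by_cases h : 0 ≤ s <;> simp [hQ'def, h]
    rw [this]
    exact Measurable.ite measurableSet_Ici (hQm i j) measurable_const
  have hQ'eq : ∀ s, 0 ≤ s → Q' s = Q s := by
    intro s hs; rw [hQ'def]; simp [hs]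
  have hQ'b : ∀ s ∈ Ioi (-1 : ℝ), ‖Q' s‖ ≤ C * Real.exp (-ε * s) := by
    intro s _
    by_cases h : 0 ≤ s
    · rw [hQ'eq s h]; exact hQ s h
    · rw [hQ'def]; simp only [if_neg h, norm_zero]; positivity
  have hQ'b' : ∀ s, ‖Q' s‖ ≤ indicator (Ici 0) (fun s => C * Real.exp (-ε * s)) s := by
    intro s
    by_cases h : 0 ≤ s
    · rw [Set.indicator_apply, if_pos (mem_Ici.2 h), hQ'eq s h]; exact hQ s h
    · rw [Set.indicator_apply, if_neg (fun hh => h (mem_Ici.1 hh)), hQ'def]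
      simp [if_neg h]
  have hQ'ble : ∀ x : ℝ, ∀ s ∈ Ioi x, ‖Q' s‖ ≤ C * Real.exp (-ε * s) := by
    intro x s _
    by_cases h : 0 ≤ s
    · rw [hQ'eq s h]; exact hQ s h
    · rw [hQ'def]; simp only [if_neg h, norm_zero]; positivity
  -- measurability facts for bounded continuous functions
  have hXaem : ∀ (y : BoundedContinuousFunction ℝ (Fin (2*n) → ℂ)) (μ : Measure ℝ), ∀ j, AEMeasurable (fun s => y s j) μ := by
    intro y μ j
    exact ((measurable_pi_apply j).comp y.continuous.measurable).aemeasurable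
  -- integrability of the kernel against a bounded continuous function, on any Ioi x
  have hKint : ∀ (y : BoundedContinuousFunction ℝ (Fin (2*n) → ℂ)) (x : ℝ),
      Integrable (fun s => (expDiag n ξ lam (x - s) * Q' s).mulVec (y s))
        (volume.restrict (Ioi x)) := by
    intro y x
    exact integrable_integrand hε x ‖y‖ Q' hQ'm (hQ'ble x) y (fun j => hXaem y _ j)
      (fun s _ => y.norm_coe_le_norm s)
  -- the auxiliary kernel with the x-dependence factored out
  set g : BoundedContinuousFunction ℝ (Fin (2*n) → ℂ) → ℝ → (Fin (2*n) → ℂ) :=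
    fun y s => (expDiag n ξ lam (0 - s) * Q' s).mulVec (y s) with hgdef
  have hg_int : ∀ y : BoundedContinuousFunction ℝ (Fin (2*n) → ℂ), Integrable (g y) := by
    intro y
    apply Integrable.mono' (g := indicator (Ici 0) (fun s => (C * ‖y‖) * Real.exp (-ε * s)))
    · rw [integrable_indicator_iff measurableSet_Ici, integrableOn_Ici_iff_integrableOn_Ioi]
      exact (exp_neg_integrableOn_Ioi 0 hε).const_mul _
    · exact (meas_integrand 0 Q' hQ'm y y.continuous.measurable).aestronglyMeasurable
    · apply Filter.Eventually.of_forall; intro s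
      calc ‖g y s‖ ≤ ‖Q' s‖ * ‖y s‖ := norm_expDiag_mul_mulVec_le n ξ lam _ _ _
        _ ≤ indicator (Ici 0) (fun s => (C * ‖y‖) * Real.exp (-ε * s)) s := by
            by_cases h : 0 ≤ s
            · rw [Set.indicator_apply, if_pos (mem_Ici.2 h)]
              calc ‖Q' s‖ * ‖y s‖ ≤ (C * Real.exp (-ε * s)) * ‖y‖ := by
                    apply mul_le_mul _ (y.norm_coe_le_norm s) (norm_nonneg _) (by positivity)
                    rw [hQ'eq s h]; exact hQ s h
                _ = (C * ‖y‖) * Real.exp (-ε * s) := by ring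
            · rw [Set.indicator_apply, if_neg (fun hh => h (mem_Ici.1 hh)), hQ'def]
              simp [if_neg h]
  -- split off the x-dependence of the kernel
  have hsplit : ∀ (y : BoundedContinuousFunction ℝ (Fin (2*n) → ℂ)) (x : ℝ),
      (∫ s in Ioi x, (expDiag n ξ lam (x - s) * Q' s).mulVec (y s)) =
        (expDiag n ξ lam x).mulVec (∫ s in Ioi x, g y s) := by
    intro y x
    have hc := ContinuousLinearMap.integral_comp_comm
      (LinearMap.toContinuousLinearMap ((expDiag n ξ lam x).mulVecLin))
      ((hg_int y).integrableOn (s := Ioi x))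
    simp only [LinearMap.coe_toContinuousLinearMap', Matrix.mulVecLin_apply] at hc
    rw [← hc]
    apply integral_congr_ae
    apply Filter.Eventually.of_forall
    intro s
    rw [hgdef]
    simp only
    rw [Matrix.mulVec_mulVec, ← mul_assoc, expDiag_mul]
    ring_nf
  -- the solution operator as a plain function
  set Tf : BoundedContinuousFunction ℝ (Fin (2*n) → ℂ) → ℝ → (Fin (2*n) → ℂ) := fun y x =>
    (expDiag n ξ lam x).mulVec c +
      Complex.I • ∫ s in Ioi x, (expDiag n ξ lam (x - s) * Q' s).mulVec (y s) with hTfdef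
  have hTcont : ∀ y : BoundedContinuousFunction ℝ (Fin (2*n) → ℂ), Continuous (Tf y) := by
    intro y
    have h1 : ∀ x : ℝ, (∫ s in Ioi x, g y s) =
        (∫ s in Ioi 0, g y s) - ∫ t in (0 : ℝ)..x, g y t := by
      intro x
      rw [Ioi_integral_split (hg_int y) 0 x]; abel
    have hGcont : Continuous fun x => ∫ s in Ioi x, g y s := by
      apply Continuous.congr _ (fun x => (h1 x).symm)
      exact continuous_const.sub ((hg_int y).continuous_primitive 0)
    have h2 : ∀ x, Tf y x = (expDiag n ξ lam x).mulVec c +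
        Complex.I • ((expDiag n ξ lam x).mulVec (∫ s in Ioi x, g y s)) := by
      intro x; rw [hTfdef]; simp only; rw [hsplit y x]
    apply Continuous.congr _ (fun x => (h2 x).symm)
    exact (cont_mulVec (expDiag_continuous n ξ lam) continuous_const).add
      ((cont_mulVec (expDiag_continuous n ξ lam) hGcont).const_smul Complex.I)
  have hTbound : ∀ y : BoundedContinuousFunction ℝ (Fin (2*n) → ℂ), ∀ x : ℝ, ‖Tf y x‖ ≤ ‖c‖ + (C * ‖y‖) / ε := by
    intro y x
    have h1 : ‖(expDiag n ξ lam x).mulVec c‖ ≤ ‖c‖ :=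
      (Matrix.linfty_opNorm_mulVec _ _).trans
        (mul_le_of_le_one_left (norm_nonneg c) (expDiag_norm_le n ξ lam x))
    have h2 : ‖∫ s in Ioi x, (expDiag n ξ lam (x - s) * Q' s).mulVec (y s)‖ ≤
        (C * ‖y‖) * Real.exp (-ε * max x 0) / ε := by
      apply key_bound hε (by positivity) x
      intro s hs
      calc ‖(expDiag n ξ lam (x - s) * Q' s).mulVec (y s)‖ ≤ ‖Q' s‖ * ‖y s‖ :=
            norm_expDiag_mul_mulVec_le n ξ lam _ _ _
        _ ≤ indicator (Ici 0) (fun s => (C * ‖y‖) * Real.exp (-ε * s)) s := by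
            by_cases h : 0 ≤ s
            · rw [Set.indicator_apply, if_pos (mem_Ici.2 h)]
              calc ‖Q' s‖ * ‖y s‖ ≤ (C * Real.exp (-ε * s)) * ‖y‖ := by
                    apply mul_le_mul _ (y.norm_coe_le_norm s) (norm_nonneg _) (by positivity)
                    rw [hQ'eq s h]; exact hQ s h
                _ = (C * ‖y‖) * Real.exp (-ε * s) := by ring
            · rw [Set.indicator_apply, if_neg (fun hh => h (mem_Ici.1 hh)), hQ'def]
              simp [if_neg h]
    have h3 : (C * ‖y‖) * Real.exp (-ε * max x 0) / ε ≤ (C * ‖y‖) / ε := by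
      have hexp : Real.exp (-ε * max x 0) ≤ 1 := by
        rw [Real.exp_le_one_iff]
        have h4 : 0 ≤ ε * max x 0 := by positivity
        linarith
      calc (C * ‖y‖) * Real.exp (-ε * max x 0) / ε ≤ (C * ‖y‖) * 1 / ε := by
            gcongr
        _ = (C * ‖y‖) / ε := by ring
    calc ‖Tf y x‖ ≤ ‖(expDiag n ξ lam x).mulVec c‖ +
          ‖Complex.I • ∫ s in Ioi x, (expDiag n ξ lam (x - s) * Q' s).mulVec (y s)‖ := by
          rw [hTfdef]; exact norm_add_le _ _
      _ ≤ ‖c‖ + (C * ‖y‖) / ε := by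
          rw [norm_smul, Complex.norm_I, one_mul]
          exact add_le_add h1 (h2.trans h3)
  -- the operator on the space of bounded continuous functions
  set Tm : BoundedContinuousFunction ℝ (Fin (2*n) → ℂ) → BoundedContinuousFunction ℝ (Fin (2*n) → ℂ) := fun y => BoundedContinuousFunction.ofNormedAddCommGroup
    (Tf y) (hTcont y) _ (hTbound y) with hTmdef
  have hTm_apply : ∀ (y : BoundedContinuousFunction ℝ (Fin (2*n) → ℂ)) (x : ℝ),
      Tm y x = Tf y x := fun y x => rfl
  -- the contraction estimate for iterates
  set a : ℕ → ℝ := fun m => (C / ε) ^ m / (m.factorial : ℝ) with hadef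
  have ha_nonneg : ∀ m, 0 ≤ a m := by
    intro m; rw [hadef]; positivity
  have ha_succ : ∀ m : ℕ, a (m + 1) = a m * (C / ε) / ((m : ℝ) + 1) := by
    intro m
    rw [hadef]
    simp only [pow_succ, Nat.factorial_succ]
    push_cast
    field_simp
  -- the exponential-combination arithmetic identity
  have harith : ∀ (m : ℕ) (D e : ℝ),
      C * (a m * D) * e / (((m : ℝ) + 1) * ε) = a (m + 1) * e * D := by
    intro m D e
    rw [ha_succ m, hadef]
    have hm1 : ((m : ℝ) + 1) ≠ 0 := by positivity
    field_simp
  have hexpc : ∀ (m : ℕ) (s : ℝ),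
      Real.exp (-ε * s) * Real.exp (-((m : ℝ) * ε) * s) = Real.exp (-(((m : ℝ) + 1) * ε) * s) := by
    intro m s
    rw [← Real.exp_add]
    congr 1
    ring
  -- the main pointwise bound used in both existence and uniqueness steps
  have hpointwise : ∀ (m : ℕ) (D : ℝ) (hD : 0 ≤ D) (x : ℝ) (u v : ℝ → Fin (2*n) → ℂ)
      (hA : ℝ → Matrix (Fin (2*n)) (Fin (2*n)) ℂ) (_ : True),
      True := fun _ _ _ _ _ _ _ _ => trivial
  clear hpointwise
  have hiter : ∀ (m : ℕ) (y z : BoundedContinuousFunction ℝ (Fin (2*n) → ℂ)) (x : ℝ),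
      ‖(Tm^[m] y) x - (Tm^[m] z) x‖ ≤
        a m * Real.exp (-((m : ℝ) * ε) * max x 0) * dist y z := by
    intro m
    induction m with
    | zero =>
      intro y z x
      have h1 : ‖y x - z x‖ ≤ dist y z := by
        rw [← dist_eq_norm]; exact BoundedContinuousFunction.dist_coe_le_dist x
      simpa [hadef] using h1
    | succ m ih =>
      intro y z x
      have hyx : (Tm^[m+1] y) x = Tf (Tm^[m] y) x := by
        rw [Function.iterate_succ_apply']; exact hTm_apply _ x
      have hzx : (Tm^[m+1] z) x = Tf (Tm^[m] z) x := by
        rw [Function.iterate_succ_apply']; exact hTm_apply _ x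
      set u := Tm^[m] y with hudef
      set v := Tm^[m] z with hvdef
      have hdiff : Tf u x - Tf v x = Complex.I •
          ∫ s in Ioi x, ((expDiag n ξ lam (x - s) * Q' s).mulVec (u s) -
            (expDiag n ξ lam (x - s) * Q' s).mulVec (v s)) := by
        rw [integral_sub (hKint u x) (hKint v x), hTfdef]
        simp only
        rw [add_sub_add_left_eq_sub, ← smul_sub]
      rw [hyx, hzx, hdiff, norm_smul, Complex.norm_I, one_mul]
      have hkb := key_bound (b := ((m : ℝ) + 1) * ε) (B := C * (a m * dist y z))
        (by positivity) (by positivity) x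
        (fun s => (expDiag n ξ lam (x - s) * Q' s).mulVec (u s) -
          (expDiag n ξ lam (x - s) * Q' s).mulVec (v s)) ?_
      · refine hkb.trans ?_
        rw [harith m (dist y z) (Real.exp (-(((m : ℝ) + 1) * ε) * max x 0))]
        apply le_of_eq
        congr 2
        push_cast
        ring
      · intro s hs
        show ‖(expDiag n ξ lam (x - s) * Q' s).mulVec (u s) -
          (expDiag n ξ lam (x - s) * Q' s).mulVec (v s)‖ ≤ _
        rw [← Matrix.mulVec_sub]
        by_cases h : 0 ≤ s
        · rw [Set.indicator_apply, if_pos (mem_Ici.2 h)]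
          calc ‖(expDiag n ξ lam (x - s) * Q' s).mulVec (u s - v s)‖
              ≤ ‖Q' s‖ * ‖u s - v s‖ := norm_expDiag_mul_mulVec_le n ξ lam _ _ _
            _ ≤ (C * Real.exp (-ε * s)) *
                  (a m * Real.exp (-((m : ℝ) * ε) * s) * dist y z) := by
                apply mul_le_mul (by rw [hQ'eq s h]; exact hQ s h) _ (norm_nonneg _)
                  (by positivity)
                have := ih y z s
                rwa [max_eq_left h] at this
            _ = C * (a m * dist y z) *
                  (Real.exp (-ε * s) * Real.exp (-((m : ℝ) * ε) * s)) := by ring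
            _ = C * (a m * dist y z) * Real.exp (-(((m : ℝ) + 1) * ε) * s) := by
                rw [hexpc m s]
        · rw [Set.indicator_apply, if_neg (fun hh => h (mem_Ici.1 hh))]
          have hQ0 : Q' s = 0 := by rw [hQ'def]; simp [if_neg h]
          rw [hQ0, mul_zero]
          simp [Matrix.zero_mulVec]
  -- distance estimate for iterates
  have hdist : ∀ (m : ℕ) (y z : BoundedContinuousFunction ℝ (Fin (2*n) → ℂ)),
      dist (Tm^[m] y) (Tm^[m] z) ≤ a m * dist y z := by
    intro m y z
    rw [BoundedContinuousFunction.dist_le (by positivity)]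
    intro x
    rw [dist_eq_norm]
    refine (hiter m y z x).trans ?_
    have hexp1 : Real.exp (-((m : ℝ) * ε) * max x 0) ≤ 1 := by
      rw [Real.exp_le_one_iff]
      have h4 : 0 ≤ (m : ℝ) * ε * max x 0 := by positivity
      linarith
    calc a m * Real.exp (-((m : ℝ) * ε) * max x 0) * dist y z
        ≤ a m * 1 * dist y z := by
          apply mul_le_mul_of_nonneg_right _ dist_nonneg
          exact mul_le_mul_of_nonneg_left hexp1 (ha_nonneg m)
      _ = a m * dist y z := by ring
  -- pick an iterate which is a contraction
  obtain ⟨m, hm⟩ : ∃ m : ℕ, a m < 1 := by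
    have := (FloorSemiring.tendsto_pow_div_factorial_atTop (K := ℝ) (C / ε)).eventually_lt_const
      one_pos
    exact this.exists
  set Kc : NNReal := ⟨a m, ha_nonneg m⟩ with hKcdef
  have hcontr : ContractingWith Kc (Tm^[m]) := by
    constructor
    · rw [← NNReal.coe_lt_one]; exact hm
    · exact LipschitzWith.of_dist_le_mul (fun y z => hdist m y z)
  haveI : Nonempty (BoundedContinuousFunction ℝ (Fin (2*n) → ℂ)) := ⟨0⟩
  set p := ContractingWith.fixedPoint (Tm^[m]) hcontr with hpdef
  have hpfix : Tm p = p := by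
    have h1 : Function.IsFixedPt (Tm^[m]) (Tm p) := by
      show Tm^[m] (Tm p) = Tm p
      rw [← Function.iterate_succ_apply, Function.iterate_succ_apply']
      exact congrArg Tm (hcontr.fixedPoint_isFixedPt)
    exact hcontr.fixedPoint_unique h1
  -- the fixed point satisfies the equation with Q
  have hpQ : ∀ x ≥ (0 : ℝ), p x = (expDiag n ξ lam x).mulVec c +
      Complex.I • ∫ s in Ioi x, (expDiag n ξ lam (x - s) * Q s).mulVec (p s) := by
    intro x hx
    conv_lhs => rw [← hpfix]
    rw [hTm_apply, hTfdef]
    simp only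
    congr 2
    apply setIntegral_congr_fun measurableSet_Ioi
    intro s hs
    show (expDiag n ξ lam (x - s) * Q' s).mulVec (p s) =
      (expDiag n ξ lam (x - s) * Q s).mulVec (p s)
    rw [hQ'eq s (le_trans hx (le_of_lt hs))]
  refine ⟨⇑p, ⟨p.continuous.continuousOn, ⟨‖p‖, fun x _ => p.norm_coe_le_norm x⟩, hpQ⟩, ?_⟩
  -- uniqueness
  intro z hzc hzb hzeq
  obtain ⟨M', hM'⟩ := hzb
  set D : ℝ := M' + ‖p‖ with hDdef
  have hM'0 : 0 ≤ M' := le_trans (norm_nonneg _) (hM' 0 le_rfl)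
  have hD0 : 0 ≤ D := by rw [hDdef]; positivity
  have hzae : ∀ x ≥ (0 : ℝ), ∀ j, AEMeasurable (fun s => z s j) (volume.restrict (Ioi x)) := by
    intro x hx j
    have h1 : AEMeasurable z (volume.restrict (Ici 0)) :=
      hzc.aemeasurable measurableSet_Ici
    have h2 : AEMeasurable z (volume.restrict (Ioi x)) :=
      h1.mono_measure (Measure.restrict_mono (fun s hs => le_trans hx (le_of_lt hs)) le_rfl)
    exact (measurable_pi_apply j).comp_aemeasurable h2
  have hest : ∀ (m : ℕ), ∀ x ≥ (0 : ℝ),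
      ‖z x - p x‖ ≤ a m * Real.exp (-((m : ℝ) * ε) * x) * D := by
    intro m
    induction m with
    | zero =>
      intro x hx
      have h1 : ‖z x - p x‖ ≤ M' + ‖p‖ :=
        (norm_sub_le _ _).trans (add_le_add (hM' x hx) (p.norm_coe_le_norm x))
      simpa [hadef, hDdef] using h1
    | succ m ih =>
      intro x hx
      have hz_int : Integrable (fun s => (expDiag n ξ lam (x - s) * Q s).mulVec (z s))
          (volume.restrict (Ioi x)) :=
        integrable_integrand hε x M' Q hQm
          (fun s hs => hQ s (le_trans hx (le_of_lt hs))) z (hzae x hx)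
          (fun s hs => hM' s (le_trans hx (le_of_lt hs)))
      have hp_int : Integrable (fun s => (expDiag n ξ lam (x - s) * Q s).mulVec (p s))
          (volume.restrict (Ioi x)) :=
        integrable_integrand hε x ‖p‖ Q hQm
          (fun s hs => hQ s (le_trans hx (le_of_lt hs))) p (fun j => hXaem p _ j)
          (fun s _ => p.norm_coe_le_norm s)
      have hdiff : z x - p x = Complex.I •
          ∫ s in Ioi x, ((expDiag n ξ lam (x - s) * Q s).mulVec (z s) -
            (expDiag n ξ lam (x - s) * Q s).mulVec (p s)) := by
        rw [integral_sub hz_int hp_int, hzeq x hx, hpQ x hx,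
          add_sub_add_left_eq_sub, ← smul_sub]
      rw [hdiff, norm_smul, Complex.norm_I, one_mul]
      have hkb := key_bound (b := ((m : ℝ) + 1) * ε) (B := C * (a m * D))
        (by positivity) (by positivity) x
        (fun s => (expDiag n ξ lam (x - s) * Q s).mulVec (z s) -
          (expDiag n ξ lam (x - s) * Q s).mulVec (p s)) ?_
      · refine hkb.trans ?_
        rw [harith m D (Real.exp (-(((m : ℝ) + 1) * ε) * max x 0))]
        rw [max_eq_left hx]
        apply le_of_eq
        congr 2
        push_cast
        ring
      · intro s hs
        have h0s : (0 : ℝ) ≤ s := le_trans hx (le_of_lt hs)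
        show ‖(expDiag n ξ lam (x - s) * Q s).mulVec (z s) -
          (expDiag n ξ lam (x - s) * Q s).mulVec (p s)‖ ≤ _
        rw [← Matrix.mulVec_sub, Set.indicator_apply, if_pos (mem_Ici.2 h0s)]
        calc ‖(expDiag n ξ lam (x - s) * Q s).mulVec (z s - p s)‖
            ≤ ‖Q s‖ * ‖z s - p s‖ := norm_expDiag_mul_mulVec_le n ξ lam _ _ _
          _ ≤ (C * Real.exp (-ε * s)) *
                (a m * Real.exp (-((m : ℝ) * ε) * s) * D) := by
              apply mul_le_mul (hQ s h0s) (ih s h0s) (norm_nonneg _) (by positivity)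
          _ = C * (a m * D) * (Real.exp (-ε * s) * Real.exp (-((m : ℝ) * ε) * s)) := by ring
          _ = C * (a m * D) * Real.exp (-(((m : ℝ) + 1) * ε) * s) := by rw [hexpc m s]
  intro x hx
  have h1 : ∀ m : ℕ, ‖z x - p x‖ ≤ a m * D := by
    intro m
    refine (hest m x hx).trans ?_
    have hexp1 : Real.exp (-((m : ℝ) * ε) * x) ≤ 1 := by
      rw [Real.exp_le_one_iff]
      have h4 : 0 ≤ (m : ℝ) * ε * x := by positivity
      linarith
    calc a m * Real.exp (-((m : ℝ) * ε) * x) * D ≤ a m * 1 * D := by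
          apply mul_le_mul_of_nonneg_right _ hD0
          exact mul_le_mul_of_nonneg_left hexp1 (ha_nonneg m)
      _ = a m * D := by ring
  have h2 : Filter.Tendsto (fun m : ℕ => a m * D) Filter.atTop (nhds 0) := by
    have := (FloorSemiring.tendsto_pow_div_factorial_atTop (K := ℝ) (C / ε)).mul_const D
    simpa using this
  have h3 : ‖z x - p x‖ ≤ 0 := ge_of_tendsto' h2 h1
  have h4 : z x - p x = 0 := by
    have := le_antisymm h3 (norm_nonneg _)
    rwa [norm_eq_zero] at this
  exact sub_eq_zero.1 h4
end

section
/- Let ε > 0 and let c₊, c₋ : [0,∞) → ℂ be continuous with |c₊(s)|, |c₋(s)| ≤ M e^{-εs}. If ∫₀^∞ c₊(s) e^{iλs} ds + ∫₀^∞ c₋(s) e^{-iλs} ds = 0 for every λ ∈ ℝ, then c₊ ≡ 0 and c₋ ≡ 0. -/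
open MeasureTheory Set

open scoped FourierTransform Real

theorem wiener_hopf_splitting_uniqueness
    (ε M : ℝ) (hε : 0 < ε)
    (cp cm : ℝ → ℂ) (hcp : Continuous cp) (hcm : Continuous cm)
    (hbp : ∀ s ≥ (0 : ℝ), ‖cp s‖ ≤ M * Real.exp (-ε * s))
    (hbm : ∀ s ≥ (0 : ℝ), ‖cm s‖ ≤ M * Real.exp (-ε * s))
    (hzero : ∀ lam : ℝ,
      (∫ s in Ioi (0 : ℝ), cp s * Complex.exp (Complex.I * lam * s)) +
      (∫ s in Ioi (0 : ℝ), cm s * Complex.exp (-(Complex.I * lam * s))) = 0) :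
    (∀ s ≥ (0 : ℝ), cp s = 0) ∧ (∀ s ≥ (0 : ℝ), cm s = 0) := by
  classical
  set h : ℝ → ℂ := fun t => if 0 ≤ t then cp t else cm (-t) with hh
  have hsm : StronglyMeasurable h := by
    apply StronglyMeasurable.ite (measurableSet_Ici : MeasurableSet (Ici (0:ℝ)))
      hcp.stronglyMeasurable (hcm.comp continuous_neg).stronglyMeasurable
  have hIci : IntegrableOn h (Ici 0) := by
    rw [integrableOn_Ici_iff_integrableOn_Ioi]
    apply Integrable.mono' ((exp_neg_integrableOn_Ioi 0 hε).const_mul M)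
    · exact hsm.aestronglyMeasurable.restrict
    · filter_upwards [ae_restrict_mem measurableSet_Ioi] with t ht
      have : h t = cp t := if_pos ht.le
      rw [this]
      exact hbp t ht.le
  have hIio : IntegrableOn h (Iio 0) := by
    rw [← (Measure.measurePreserving_neg (volume : Measure ℝ)).integrableOn_comp_preimage
        (Homeomorph.neg ℝ).measurableEmbedding]
    simp only [Function.comp_def, neg_preimage, neg_Iio, neg_zero]
    apply Integrable.mono' ((exp_neg_integrableOn_Ioi 0 hε).const_mul M)
    · exact (hsm.comp_measurable measurable_neg).aestronglyMeasurable.restrict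
    · filter_upwards [ae_restrict_mem measurableSet_Ioi] with t ht
      have h1 : ¬ (0 ≤ -t) := by simp only [mem_Ioi] at ht; linarith
      have : h (-t) = cm t := by rw [hh]; simp only [if_neg h1, neg_neg]
      rw [this]
      exact hbm t ht.le
  have hint : Integrable h := by
    rw [← integrableOn_univ, ← Iio_union_Ici (a := (0:ℝ)), integrableOn_union]
    exact ⟨hIio, hIci⟩
  -- key : the "Fourier" integral of h vanishes
  have key : ∀ lam : ℝ, (∫ t : ℝ, h t * Complex.exp (Complex.I * lam * t)) = 0 := by
    intro lam
    have hbd : ∀ t : ℝ, ‖Complex.exp (Complex.I * lam * t)‖ = 1 := by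
      intro t
      have : Complex.I * lam * t = ((lam * t : ℝ) : ℂ) * Complex.I := by push_cast; ring
      rw [this]
      exact Complex.norm_exp_ofReal_mul_I _
    have hintE : Integrable (fun t : ℝ => h t * Complex.exp (Complex.I * lam * t)) := by
      have := hint.bdd_mul (f := fun t : ℝ => Complex.exp (Complex.I * lam * t))
        ((Complex.continuous_exp.comp (by continuity)).aestronglyMeasurable)
        (c := 1) (Filter.Eventually.of_forall fun t => (hbd t).le)
      simpa [mul_comm] using this
    have hsplit := intervalIntegral.integral_Iio_add_Ici (b := (0:ℝ)) (hintE.integrableOn) (hintE.integrableOn)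
    have hIciEq : (∫ t in Ici (0:ℝ), h t * Complex.exp (Complex.I * lam * t))
        = ∫ s in Ioi (0:ℝ), cp s * Complex.exp (Complex.I * lam * s) := by
      rw [integral_Ici_eq_integral_Ioi]
      apply setIntegral_congr_fun measurableSet_Ioi
      intro t ht
      simp only [hh, if_pos (le_of_lt (mem_Ioi.mp ht))]
    have hIioEq : (∫ t in Iio (0:ℝ), h t * Complex.exp (Complex.I * lam * t))
        = ∫ s in Ioi (0:ℝ), cm s * Complex.exp (-(Complex.I * lam * s)) := by
      set g : ℝ → ℂ := fun s => cm s * Complex.exp (-(Complex.I * lam * s)) with hg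
      have e1 : (∫ t in Iio (0:ℝ), h t * Complex.exp (Complex.I * lam * t))
          = ∫ t in Iio (0:ℝ), g (-t) := by
        apply setIntegral_congr_fun measurableSet_Iio
        intro t ht
        have h1 : ¬ (0 ≤ t) := not_le.mpr ht
        simp only [hh, hg, if_neg h1]
        congr 2
        push_cast
        ring
      have e2 : (∫ t in Iic (0:ℝ), g (-t)) = ∫ s in Ioi (0:ℝ), g s := by
        rw [integral_comp_neg_Iic, neg_zero]
      rw [e1, ← integral_Iic_eq_integral_Iio, e2]
    rw [hIioEq, hIciEq] at hsplit
    rw [← hsplit, add_comm]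
    exact hzero lam
  -- Fourier transform of h vanishes
  have hF : 𝓕 h = 0 := by
    funext w
    rw [Real.fourier_real_eq_integral_exp_smul]
    calc (∫ v : ℝ, Complex.exp (↑(-2 * Real.pi * v * w) * Complex.I) • h v)
        = ∫ v : ℝ, h v * Complex.exp (Complex.I * ↑(-(2 * Real.pi * w)) * v) := by
          congr 1; funext v
          rw [smul_eq_mul, mul_comm]
          congr 2
          push_cast; ring
      _ = 0 := key _
  have hFint : Integrable (𝓕 h) := by rw [hF]; exact integrable_zero _ _ _
  have hzero' : ∀ v : ℝ, v ≠ 0 → h v = 0 := by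
    intro v hv
    have hcont : ContinuousAt h v := by
      rcases hv.lt_or_gt with hvneg | hvpos
      · have hev : h =ᶠ[nhds v] (fun t : ℝ => cm (-t)) := by
          filter_upwards [eventually_lt_nhds hvneg] with t ht
          simp [hh, not_le.mpr ht]
        exact ((hcm.comp continuous_neg).continuousAt).congr hev.symm
      · have hev : h =ᶠ[nhds v] cp := by
          filter_upwards [eventually_gt_nhds hvpos] with t ht
          simp [hh, ht.le]
        exact hcp.continuousAt.congr hev.symm
    have hi := hint.fourierInv_fourier_eq hFint hcont
    rw [hF] at hi
    rw [← hi]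
    simp [Real.fourierInv_eq]
  have hp0 : EqOn cp 0 (Ici 0) := by
    have hIoi : EqOn cp 0 (Ioi 0) := by
      intro s hs
      have h2 := hzero' s (ne_of_gt hs)
      simpa [hh, le_of_lt (mem_Ioi.mp hs)] using h2
    simpa [closure_Ioi] using hIoi.closure hcp continuous_const
  have hm0 : EqOn cm 0 (Ici 0) := by
    have hIoi : EqOn cm 0 (Ioi 0) := by
      intro s hs
      have hns : (-s : ℝ) ≠ 0 := by simp only [ne_eq, neg_eq_zero]; exact ne_of_gt hs
      have h2 := hzero' (-s) hns
      have h1 : ¬ (0 ≤ -s) := by simp only [mem_Ioi] at hs; simp only [not_le]; linarith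
      simpa [hh, h1] using h2
    simpa [closure_Ioi] using hIoi.closure hcm continuous_const
  exact ⟨fun s hs => hp0 hs, fun s hs => hm0 hs⟩
end
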